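/- arXiv:1601.02724 — 2 statements merged into one kernel-verified Lean document; each statement's English description precedes it below -/
import Mathlib

section
/- Let X = (x, y, z) : ℝ → ℝ³ be a solution of the 1-1-1 ABC flow system with X(0) = (-π/2, 0, 0), and let t₀ > 0 be such that X(t) ∈ D for all t ∈ (0, t₀) and X(t₀) ∈ ∂D. Then x(t₀) = 0 and z(t₀) < π/2. -/
/-!
Along the orbit, the region `0 < y < z < x + π/2` is entered at once: `x + π/2 - z` has derivative
`1` at `t = 0`, and `z - y` has vanishing derivative but second derivative `1`. While the orbit
stays in `D̄` it cannot leave this region. The coordinate `y` increases, since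
`ẏ = sin x + cos z > 0` when `z < x + π/2`. On the face `y = z`, `z - y` increases because
`cos x - sin x > cos y - sin y`. On the face `z = x + π/2`, the gap `x + π/2 - z` has derivative
`cos y - sin y`, positive because `y < π/4`; this bound holds since `x - cos x - y` is
nondecreasing along the orbit, so `y ≤ x + π/2 - cos x ≤ π/2 - 1`. In this region the only face
of `D` the orbit can reach is `x = 0`, and there `z < x + π/2 = π/2`.
-/

open Real Set Filter

/-- A solution of the 1-1-1 ABC flow system. -/
def IsABCSol (x y z : ℝ → ℝ) : Prop :=
  ∀ t : ℝ,
    HasDerivAt x (Real.sin (z t) + Real.cos (y t)) t ∧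
    HasDerivAt y (Real.sin (x t) + Real.cos (z t)) t ∧
    HasDerivAt z (Real.sin (y t) + Real.cos (x t)) t

/-- The open triangle `R` in the `xy`-plane with vertices `(0, -π/2)`, `(0, 3π/2)`, `(-π, π/2)`. -/
def triR : Set (ℝ × ℝ) :=
  {p | -(Real.pi / 2) < p.1 + p.2 ∧ p.2 - p.1 < 3 * Real.pi / 2 ∧ p.1 < 0}

/-- The open prism `D = R × (0, π/2)` in `ℝ³`. -/
def prismD : Set (ℝ × ℝ × ℝ) :=
  {p | (p.1, p.2.1) ∈ triR ∧ 0 < p.2.2 ∧ p.2.2 < Real.pi / 2}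

open Topology

section Calculus

variable {f f' : ℝ → ℝ}

theorem lt_of_hasDerivAt_pos_on_Ioo (hf : ∀ t, HasDerivAt f (f' t) t) {a b : ℝ} (hab : a < b)
    (hpos : ∀ t ∈ Ioo a b, 0 < f' t) : f a < f b := by
  have hmono : StrictMonoOn f (Icc a b) :=
    strictMonoOn_of_hasDerivWithinAt_pos (convex_Icc a b)
      (fun t _ ↦ (hf t).continuousAt.continuousWithinAt) (fun t _ ↦ (hf t).hasDerivWithinAt)
      (by simpa only [interior_Icc] using hpos)
  exact hmono (left_mem_Icc.2 hab.le) (right_mem_Icc.2 hab.le) hab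

theorem le_of_hasDerivAt_nonneg_on_Ioo (hf : ∀ t, HasDerivAt f (f' t) t) {a b : ℝ} (hab : a ≤ b)
    (hnonneg : ∀ t ∈ Ioo a b, 0 ≤ f' t) : f a ≤ f b := by
  have hmono : MonotoneOn f (Icc a b) :=
    monotoneOn_of_hasDerivWithinAt_nonneg (convex_Icc a b)
      (fun t _ ↦ (hf t).continuousAt.continuousWithinAt) (fun t _ ↦ (hf t).hasDerivWithinAt)
      (by simpa only [interior_Icc] using hnonneg)
  exact hmono (left_mem_Icc.2 hab) (right_mem_Icc.2 hab) hab

theorem eventually_lt_nhdsGT_of_hasDerivAt (hf : ∀ t, HasDerivAt f (f' t) t) {a : ℝ}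
    (hpos : ∀ᶠ t in 𝓝[>] a, 0 < f' t) : ∀ᶠ t in 𝓝[>] a, f a < f t := by
  obtain ⟨c, hac, hc⟩ := mem_nhdsGT_iff_exists_Ioo_subset.1 hpos
  filter_upwards [Ioo_mem_nhdsGT hac] with t ht
  exact lt_of_hasDerivAt_pos_on_Ioo hf ht.1 fun τ hτ ↦ hc ⟨hτ.1, hτ.2.trans ht.2⟩

theorem HasDerivAt.eventually_lt_right {d a : ℝ} {g : ℝ → ℝ} (hg : HasDerivAt g d a) (hd : 0 < d) :
    ∀ᶠ t in 𝓝[>] a, g a < g t := by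
  filter_upwards [(hasDerivAt_iff_tendsto_slope.1 hg).mono_left (nhdsGT_le_nhdsNE a)
    |>.eventually (eventually_gt_nhds hd), self_mem_nhdsWithin] with t hslope ht
  exact (slope_pos_iff ht).1 hslope

theorem HasDerivAt.eventually_lt_left {d a : ℝ} {g : ℝ → ℝ} (hg : HasDerivAt g d a) (hd : 0 < d) :
    ∀ᶠ t in 𝓝[<] a, g t < g a := by
  filter_upwards [(hasDerivAt_iff_tendsto_slope.1 hg).mono_left (nhdsLT_le_nhdsNE a)
    |>.eventually (eventually_gt_nhds hd), self_mem_nhdsWithin] with t hslope ht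
  exact (slope_pos_iff_gt ht).1 hslope

theorem le_of_forall_Ioo_le {g : ℝ → ℝ} {a s : ℝ} (hf : ContinuousAt f s) (hg : ContinuousAt g s)
    (has : a < s) (hle : ∀ t ∈ Ioo a s, f t ≤ g t) : f s ≤ g s :=
  le_of_tendsto_of_tendsto (hf.tendsto.mono_left nhdsWithin_le_nhds)
    (hg.tendsto.mono_left nhdsWithin_le_nhds) (eventually_of_mem (Ioo_mem_nhdsLT has) hle)

theorem HasDerivAt.pos_of_forall_Ioo_pos {g : ℝ → ℝ} {d a s : ℝ} (hg : HasDerivAt g d s)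
    (has : a < s) (hpos : ∀ t ∈ Ioo a s, 0 < g t) (hd : g s = 0 → 0 < d) : 0 < g s := by
  have hnonneg : 0 ≤ g s :=
    le_of_forall_Ioo_le continuousAt_const hg.continuousAt has fun t ht ↦ (hpos t ht).le
  refine hnonneg.lt_of_ne fun hzero ↦ ?_
  obtain ⟨t, hlt, ht⟩ :=
    ((hg.eventually_lt_left (hd hzero.symm)).and (Ioo_mem_nhdsLT has)).exists
  exact (hpos t ht).not_gt (hzero ▸ hlt)

end Calculus

theorem mapsTo_Ioc_of_forall_mapsTo_Ioo {E : Type*} [TopologicalSpace E] {γ : ℝ → E}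
    {U : Set E} {a b : ℝ} (hU : IsOpen U) (hγ : ContinuousOn γ (Ioc a b))
    (hnear : ∀ᶠ t in 𝓝[>] a, γ t ∈ U)
    (hstep : ∀ s ∈ Ioc a b, MapsTo γ (Ioo a s) U → γ s ∈ U) : MapsTo γ (Ioc a b) U := by
  obtain ⟨c, hac, hc⟩ := mem_nhdsGT_iff_exists_Ioo_subset.1 hnear
  intro t ht
  by_contra htU
  have hct : c ≤ t := not_lt.1 fun htc ↦ htU (hc ⟨ht.1, htc⟩)
  set B := Icc c b ∩ γ ⁻¹' Uᶜ
  have hB : IsClosed B :=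
    (hγ.mono (Icc_subset_Ioc_iff (hct.trans ht.2) |>.2 ⟨hac, le_rfl⟩)).preimage_isClosed_of_isClosed
      isClosed_Icc hU.isClosed_compl
  have hBbdd : BddBelow B := ⟨c, fun τ hτ ↦ hτ.1.1⟩
  have ht₁ : sInf B ∈ B := hB.csInf_mem ⟨t, ⟨hct, ht.2⟩, htU⟩ hBbdd
  refine ht₁.2 (hstep _ ⟨hac.trans_le ht₁.1.1, ht₁.1.2⟩ fun τ hτ ↦ ?_)
  by_contra hτU
  rcases lt_or_ge τ c with hτc | hcτ
  · exact hτU (hc ⟨hτ.1, hτc⟩)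
  · exact hτ.2.not_ge (csInf_le hBbdd ⟨⟨hcτ, hτ.2.le.trans ht₁.1.2⟩, hτU⟩)

section Trigonometry

theorem sin_add_cos_pos_of_lt_add_pi_div_two {X Z : ℝ} (hZ : 0 ≤ Z) (hZX : Z < X + π / 2)
    (hX : X ≤ π / 2) : 0 < sin X + cos Z := by
  have hcos : cos (X + π / 2) < cos Z := cos_lt_cos_of_nonneg_of_le_pi hZ (by linarith) hZX
  rw [cos_add_pi_div_two] at hcos
  linarith

theorem cos_sub_sin_eq_sqrt_two_mul_cos (u : ℝ) : cos u - sin u = √2 * cos (u + π / 4) := by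
  rw [cos_add, cos_pi_div_four, sin_pi_div_four]
  linear_combination (-(cos u - sin u) / 2) * sq_sqrt (zero_le_two : (0 : ℝ) ≤ 2)

theorem sin_lt_cos_of_lt_pi_div_four {u : ℝ} (h₁ : -(3 * π / 4) < u) (h₂ : u < π / 4) :
    sin u < cos u := by
  have hcos : 0 < cos (u + π / 4) := cos_pos_of_mem_Ioo ⟨by linarith, by linarith⟩
  have := cos_sub_sin_eq_sqrt_two_mul_cos u
  nlinarith [sqrt_pos.2 (zero_lt_two : (0 : ℝ) < 2)]

theorem cos_sub_sin_lt_cos_sub_sin {X C : ℝ} (hC : 0 < C) (hCX : C - π / 2 ≤ X) (hX : X ≤ 0) :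
    cos C - sin C < cos X - sin X := by
  have hcos : cos (C + π / 4) < cos |X + π / 4| :=
    cos_lt_cos_of_nonneg_of_le_pi (abs_nonneg _) (by linarith [pi_pos])
      (abs_lt.2 ⟨by linarith, by linarith⟩)
  rw [cos_abs] at hcos
  rw [cos_sub_sin_eq_sqrt_two_mul_cos, cos_sub_sin_eq_sqrt_two_mul_cos]
  exact mul_lt_mul_of_pos_left hcos (sqrt_pos.2 zero_lt_two)

theorem add_one_le_cos_of_nonpos {u : ℝ} (h₁ : -2 ≤ u) (h₂ : u ≤ 0) : u + 1 ≤ cos u := by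
  nlinarith [one_sub_sq_div_two_le_cos (x := u)]

theorem sin_add_cos_le_one_add_sin_mul {X Y Z : ℝ} (hX₁ : -π ≤ X) (hX₂ : X ≤ 0) (hY : 0 ≤ Y)
    (hYZ : Y ≤ Z) (hZ : Z ≤ π) : sin X + cos Z ≤ (1 + sin X) * (sin Z + cos Y) := by
  have hcos : cos Z ≤ cos Y := cos_le_cos_of_nonneg_of_le_pi hY hZ hYZ
  have hsinX : sin X ≤ 0 := sin_nonpos_of_nonpos_of_neg_pi_le hX₂ hX₁
  have hsinZ : 0 ≤ sin Z := sin_nonneg_of_nonneg_of_le_pi (hY.trans hYZ) hZ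
  nlinarith [neg_one_le_sin X, cos_le_one Y]

end Trigonometry

def abcTrap : Set (ℝ × ℝ × ℝ) :=
  {p | 0 < p.2.1 ∧ p.2.1 < p.2.2 ∧ p.2.2 < p.1 + π / 2}

theorem isOpen_abcTrap : IsOpen abcTrap := by
  simp only [abcTrap, ofPred_and]
  refine .inter ?_ (.inter ?_ ?_) <;> exact isOpen_lt (by fun_prop) (by fun_prop)

theorem isOpen_prismD : IsOpen prismD := by
  simp only [prismD, triR, ofPred_and]
  refine .inter (.inter ?_ (.inter ?_ ?_)) (.inter ?_ ?_) <;>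
    exact isOpen_lt (by fun_prop) (by fun_prop)

theorem mem_prismD_of_mem_abcTrap {p : ℝ × ℝ × ℝ} (hp : p ∈ abcTrap) (hx : p.1 < 0) :
    p ∈ prismD := by
  obtain ⟨hy, hyz, hzx⟩ := hp
  exact ⟨⟨by linarith, by linarith, hx⟩, by linarith, by linarith⟩

namespace IsABCSol

variable {x y z : ℝ → ℝ}

theorem continuous (h : IsABCSol x y z) : Continuous fun t ↦ (x t, y t, z t) :=
  continuous_iff_continuousAt.2 fun t ↦
    (h t).1.continuousAt.prodMk ((h t).2.1.continuousAt.prodMk (h t).2.2.continuousAt)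

theorem hasDerivAt_x_add_pi_div_two_sub_z (h : IsABCSol x y z) (t : ℝ) :
    HasDerivAt (fun s ↦ x s + π / 2 - z s) (sin (z t) + cos (y t) - (sin (y t) + cos (x t))) t :=
  ((h t).1.add_const _).sub (h t).2.2

theorem hasDerivAt_z_sub_y (h : IsABCSol x y z) (t : ℝ) :
    HasDerivAt (fun s ↦ z s - y s) (sin (y t) + cos (x t) - (sin (x t) + cos (z t))) t :=
  (h t).2.2.sub (h t).2.1

theorem hasDerivAt_x_sub_cos_sub_y (h : IsABCSol x y z) (t : ℝ) :
    HasDerivAt (fun s ↦ x s - cos (x s) - y s) ((1 + sin (x t)) * (sin (z t) + cos (y t)) - (sin (x t) + cos (z t))) t :=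
  (((h t).1.sub (h t).1.cos).sub (h t).2.1).congr_deriv (by ring)

theorem eventually_mem_abcTrap (h : IsABCSol x y z) (hx0 : x 0 = -(π / 2)) (hy0 : y 0 = 0)
    (hz0 : z 0 = 0) (hD : ∀ᶠ t in 𝓝[>] 0, (x t, y t, z t) ∈ prismD) :
    ∀ᶠ t in 𝓝[>] 0, (x t, y t, z t) ∈ abcTrap := by
  have hgap : ∀ᶠ t in 𝓝[>] 0, 0 < x t + π / 2 - z t := by
    simpa [hx0, hz0] using
      (h.hasDerivAt_x_add_pi_div_two_sub_z 0).eventually_lt_right (by simp [hx0, hy0, hz0])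
  -- `z - y` has vanishing first derivative at `0`, but positive second derivative.
  have hsub' : ∀ᶠ t in 𝓝[>] 0, 0 < sin (y t) + cos (x t) - (sin (x t) + cos (z t)) := by
    have hd := (((h 0).2.1.sin.add (h 0).1.cos).sub ((h 0).1.sin.add (h 0).2.2.cos))
    simpa [hx0, hy0, hz0] using hd.eventually_lt_right (by simp [hx0, hy0, hz0])
  have hsub : ∀ᶠ t in 𝓝[>] 0, 0 < z t - y t := by
    simpa [hy0, hz0] using eventually_lt_nhdsGT_of_hasDerivAt h.hasDerivAt_z_sub_y hsub'
  have hy : ∀ᶠ t in 𝓝[>] 0, 0 < y t := by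
    have hy' : ∀ᶠ t in 𝓝[>] 0, 0 < sin (x t) + cos (z t) := by
      filter_upwards [hgap, hD] with t hgap hD
      exact sin_add_cos_pos_of_lt_add_pi_div_two hD.2.1.le (by linarith)
        (by linarith [hD.1.2.2, pi_pos])
    simpa [hy0] using eventually_lt_nhdsGT_of_hasDerivAt (fun t ↦ (h t).2.1) hy'
  filter_upwards [hgap, hsub, hy] with t hgap hsub hy
  exact ⟨hy, by linarith, by linarith⟩

theorem lt_pi_div_four_of_mapsTo_Ioo (h : IsABCSol x y z) (hx0 : x 0 = -(π / 2))
    (hy0 : y 0 = 0) {s : ℝ} (hs : 0 < s) (hD : MapsTo (fun t ↦ (x t, y t, z t)) (Ioo 0 s) prismD)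
    (hT : MapsTo (fun t ↦ (x t, y t, z t)) (Ioo 0 s) abcTrap) (hx : -(π / 2) ≤ x s)
    (hx' : x s ≤ 0) : y s < π / 4 := by
  have hmono := le_of_hasDerivAt_nonneg_on_Ioo h.hasDerivAt_x_sub_cos_sub_y hs.le fun t ht ↦ by
    obtain ⟨hy, hyz, hzx⟩ := hT ht
    have hD := hD ht
    exact sub_nonneg.2 (sin_add_cos_le_one_add_sin_mul (by linarith [pi_pos]) hD.1.2.2.le hy.le
      hyz.le (by linarith [hD.2.2, pi_pos]))
  simp only [hx0, hy0, cos_neg, cos_pi_div_two] at hmono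
  linarith [add_one_le_cos_of_nonpos (by linarith [pi_le_four]) hx', pi_lt_four]

theorem mem_abcTrap_of_mapsTo_Ioo (h : IsABCSol x y z) (hx0 : x 0 = -(π / 2)) (hy0 : y 0 = 0)
    {s : ℝ} (hs : 0 < s)
    (hD : MapsTo (fun t ↦ (x t, y t, z t)) (Ioo 0 s) prismD)
    (hT : MapsTo (fun t ↦ (x t, y t, z t)) (Ioo 0 s) abcTrap) :
    (x s, y s, z s) ∈ abcTrap := by
  have hx : x s ≤ 0 := le_of_forall_Ioo_le (h s).1.continuousAt continuousAt_const hs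
    fun t ht ↦ (hD ht).1.2.2.le
  have hyz : y s ≤ z s := le_of_forall_Ioo_le (h s).2.1.continuousAt (h s).2.2.continuousAt hs
    fun t ht ↦ (hT ht).2.1.le
  have hzx : z s ≤ x s + π / 2 :=
    le_of_forall_Ioo_le (h s).2.2.continuousAt ((h s).1.continuousAt.add continuousAt_const) hs
      fun t ht ↦ (hT ht).2.2.le
  have hy : 0 < y s := by
    simpa [hy0] using lt_of_hasDerivAt_pos_on_Ioo (fun t ↦ (h t).2.1) hs fun t ht ↦
      sin_add_cos_pos_of_lt_add_pi_div_two (hD ht).2.1.le (hT ht).2.2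
        (by linarith [(hD ht).1.2.2, pi_pos])
  have hyπ : y s < π / 4 := h.lt_pi_div_four_of_mapsTo_Ioo hx0 hy0 hs hD hT (by linarith) hx
  refine ⟨hy, sub_pos.1 ?_, sub_pos.1 ?_⟩
  · refine (h.hasDerivAt_z_sub_y s).pos_of_forall_Ioo_pos hs
      (fun t ht ↦ sub_pos.2 (hT ht).2.1) fun hzy ↦ ?_
    rw [sub_eq_zero.1 hzy]
    linarith [cos_sub_sin_lt_cos_sub_sin hy (by linarith) hx]
  · refine (h.hasDerivAt_x_add_pi_div_two_sub_z s).pos_of_forall_Ioo_pos hs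
      (fun t ht ↦ sub_pos.2 (hT ht).2.2) fun hxz ↦ ?_
    rw [← sub_eq_zero.1 hxz, sin_add_pi_div_two]
    linarith [sin_lt_cos_of_lt_pi_div_four (by linarith [pi_pos]) hyπ]

end IsABCSol

theorem stmt13 (x y z : ℝ → ℝ) (h : IsABCSol x y z)
    (hx0 : x 0 = -(π / 2)) (hy0 : y 0 = 0) (hz0 : z 0 = 0)
    (t₀ : ℝ) (ht₀ : 0 < t₀) (hin : ∀ t ∈ Set.Ioo 0 t₀, (x t, y t, z t) ∈ prismD)
    (hbd : (x t₀, y t₀, z t₀) ∈ frontier prismD) :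
    x t₀ = 0 ∧ z t₀ < π / 2 := by
  have htrap : MapsTo (fun t ↦ (x t, y t, z t)) (Ioc 0 t₀) abcTrap :=
    mapsTo_Ioc_of_forall_mapsTo_Ioo isOpen_abcTrap h.continuous.continuousOn
      (h.eventually_mem_abcTrap hx0 hy0 hz0 (eventually_of_mem (Ioo_mem_nhdsGT ht₀) hin))
      fun s hs hT ↦ h.mem_abcTrap_of_mapsTo_Ioo hx0 hy0 hs.1
        (fun t ht ↦ hin t ⟨ht.1, ht.2.trans_le hs.2⟩) hT
  have hT₀ := htrap ⟨ht₀, le_rfl⟩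
  have hx : x t₀ ≤ 0 := le_of_forall_Ioo_le (h t₀).1.continuousAt continuousAt_const ht₀
    fun t ht ↦ (hin t ht).1.2.2.le
  have hx' : x t₀ = 0 := by
    refine hx.antisymm (not_lt.1 fun hneg ↦ ?_)
    rw [isOpen_prismD.frontier_eq] at hbd
    exact hbd.2 (mem_prismD_of_mem_abcTrap hT₀ hneg)
  exact ⟨hx', by linarith [hT₀.2.2]⟩
end

section
/- Let X = (x, y, z) : ℝ → ℝ³ be a solution of the 1-1-1 ABC flow system with X(0) = (-π/2, 0, a) for some a ∈ ℝ, and suppose there is t₀ > 0 with x(t₀) = 0 and z(t₀) = π/2. Then X(t + 4t₀) = X(t) + (2π, 0, 0) for every t ∈ ℝ. -/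
/-!
The ABC flow is reversible in two ways: reversing time and applying
`R₁ (x, y, z) = (-π - x, -y, z)` or `R₂ (x, y, z) = (-x, y, π - z)` maps solutions to solutions.
The initial point `(-π/2, 0, z 0)` is fixed by `R₁` and the point `(0, y t₀, π/2)` by `R₂`, so by
uniqueness of solutions the orbit is symmetric under `R₁` about time `0` and under `R₂` about
time `t₀`. The composition of these two reflections is the time shift by `2 t₀`, acting as
`(x, y, z) ↦ (x + π, -y, π - z)`; applying it twice gives the claim.
-/

open Real Set Filter

noncomputable def abcField (p : ℝ × ℝ × ℝ) : ℝ × ℝ × ℝ :=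
  (sin p.2.2 + cos p.2.1, sin p.1 + cos p.2.2, sin p.2.1 + cos p.1)

lemma lipschitzWith_abcField : LipschitzWith 2 abcField := by
  have hsum {f g : ℝ × ℝ × ℝ → ℝ} (hf : LipschitzWith 1 f) (hg : LipschitzWith 1 g) :
      LipschitzWith 2 fun p => sin (f p) + cos (g p) := by
    simpa [one_add_one_eq_two] using
      (lipschitzWith_sin.comp hf).add (lipschitzWith_cos.comp hg)
  have h₁ : LipschitzWith 1 fun p : ℝ × ℝ × ℝ => p.1 := LipschitzWith.prod_fst
  have h₂ : LipschitzWith 1 fun p : ℝ × ℝ × ℝ => p.2.1 := by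
    simpa [Function.comp_def] using LipschitzWith.prod_fst.comp LipschitzWith.prod_snd
  have h₃ : LipschitzWith 1 fun p : ℝ × ℝ × ℝ => p.2.2 := by
    simpa [Function.comp_def] using LipschitzWith.prod_snd.comp LipschitzWith.prod_snd
  have := (hsum h₃ h₂).prodMk ((hsum h₁ h₃).prodMk (hsum h₂ h₁))
  rwa [max_self, max_self] at this

namespace IsABCSol

variable {x y z x' y' z' : ℝ → ℝ}

lemma hasDerivAt_abcField (h : IsABCSol x y z) (t : ℝ) :
    HasDerivAt (fun t => (x t, y t, z t)) (abcField (x t, y t, z t)) t :=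
  (h t).1.prodMk ((h t).2.1.prodMk (h t).2.2)

lemma unique (h : IsABCSol x y z) (h' : IsABCSol x' y' z') {s : ℝ}
    (hx : x s = x' s) (hy : y s = y' s) (hz : z s = z' s) : x = x' ∧ y = y' ∧ z = z' := by
  have hXY : (fun t => (x t, y t, z t)) = fun t => (x' t, y' t, z' t) :=
    ODE_solution_unique_univ (v := fun _ => abcField) (s := fun _ => univ) (t₀ := s)
      (fun _ => lipschitzWith_abcField.lipschitzOnWith)
      (fun t => ⟨h.hasDerivAt_abcField t, trivial⟩)
      (fun t => ⟨h'.hasDerivAt_abcField t, trivial⟩) (by simp [hx, hy, hz])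
  simp only [funext_iff, Prod.ext_iff] at hXY
  exact ⟨funext fun t => (hXY t).1, funext fun t => (hXY t).2.1, funext fun t => (hXY t).2.2⟩

lemma reverse_neg_pi_sub_x (h : IsABCSol x y z) (c : ℝ) :
    IsABCSol (fun t => -π - x (c - t)) (fun t => -y (c - t)) (fun t => z (c - t)) := by
  intro t
  obtain ⟨hx, hy, hz⟩ := h (c - t)
  have hπ : -π - x (c - t) = -(x (c - t) + π) := by ring
  refine ⟨?_, ?_, ?_⟩
  · simpa using (hx.comp_const_sub c t).const_sub (-π)
  · exact (hy.comp_const_sub c t).fun_neg.congr_deriv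
      (by beta_reduce; rw [hπ, sin_neg, sin_add_pi]; ring)
  · exact (hz.comp_const_sub c t).congr_deriv
      (by beta_reduce; rw [hπ, cos_neg, cos_add_pi, sin_neg]; ring)

lemma reverse_pi_sub_z (h : IsABCSol x y z) (c : ℝ) :
    IsABCSol (fun t => -x (c - t)) (fun t => y (c - t)) (fun t => π - z (c - t)) := by
  intro t
  obtain ⟨hx, hy, hz⟩ := h (c - t)
  refine ⟨?_, ?_, ?_⟩
  · exact (hx.comp_const_sub c t).fun_neg.congr_deriv (by beta_reduce; rw [sin_pi_sub, neg_neg])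
  · exact (hy.comp_const_sub c t).congr_deriv (by beta_reduce; rw [sin_neg, cos_pi_sub]; ring)
  · simpa using (hz.comp_const_sub c t).const_sub π

lemma symm_of_eq_neg_pi_div_two (h : IsABCSol x y z) {s : ℝ}
    (hx : x s = -(π / 2)) (hy : y s = 0) :
    ∀ t, x t = -π - x (2 * s - t) ∧ y t = -y (2 * s - t) ∧ z t = z (2 * s - t) := by
  have hs : 2 * s - s = s := by ring
  obtain ⟨hx', hy', hz'⟩ := h.unique (h.reverse_neg_pi_sub_x (2 * s)) (s := s)
    (by simp only [hs, hx]; ring) (by simp [hs, hy]) (by simp [hs])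
  exact fun t => ⟨congrFun hx' t, congrFun hy' t, congrFun hz' t⟩

lemma symm_of_eq_zero_of_eq_pi_div_two (h : IsABCSol x y z) {s : ℝ}
    (hx : x s = 0) (hz : z s = π / 2) :
    ∀ t, x t = -x (2 * s - t) ∧ y t = y (2 * s - t) ∧ z t = π - z (2 * s - t) := by
  have hs : 2 * s - s = s := by ring
  obtain ⟨hx', hy', hz'⟩ := h.unique (h.reverse_pi_sub_z (2 * s)) (s := s)
    (by simp [hs, hx]) (by simp [hs]) (by simp only [hs, hz]; ring)
  exact fun t => ⟨congrFun hx' t, congrFun hy' t, congrFun hz' t⟩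

end IsABCSol

theorem stmt17_general (x y z : ℝ → ℝ) (h : IsABCSol x y z)
    (hx0 : x 0 = -(π / 2)) (hy0 : y 0 = 0)
    (t₀ : ℝ) (hx : x t₀ = 0) (hz : z t₀ = π / 2) :
    ∀ t : ℝ, x (t + 4 * t₀) = x t + 2 * π ∧ y (t + 4 * t₀) = y t ∧
      z (t + 4 * t₀) = z t := by
  have shift (t : ℝ) :
      x (t + 2 * t₀) = x t + π ∧ y (t + 2 * t₀) = -y t ∧ z (t + 2 * t₀) = π - z t := by
    obtain ⟨hx₁, hy₁, hz₁⟩ := h.symm_of_eq_neg_pi_div_two hx0 hy0 (-t)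
    obtain ⟨hx₂, hy₂, hz₂⟩ := h.symm_of_eq_zero_of_eq_pi_div_two hx hz (t + 2 * t₀)
    rw [show 2 * 0 - -t = t by ring] at hx₁ hy₁ hz₁
    rw [show 2 * t₀ - (t + 2 * t₀) = -t by ring] at hx₂ hy₂ hz₂
    refine ⟨?_, ?_, ?_⟩ <;> linarith
  intro t
  obtain ⟨hx₁, hy₁, hz₁⟩ := shift t
  obtain ⟨hx₂, hy₂, hz₂⟩ := shift (t + 2 * t₀)
  rw [show t + 2 * t₀ + 2 * t₀ = t + 4 * t₀ by ring] at hx₂ hy₂ hz₂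
  refine ⟨?_, ?_, ?_⟩ <;> linarith

theorem stmt17 (x y z : ℝ → ℝ) (h : IsABCSol x y z) (a : ℝ)
    (hx0 : x 0 = -(π / 2)) (hy0 : y 0 = 0) (hz0 : z 0 = a)
    (t₀ : ℝ) (ht₀ : 0 < t₀) (hx : x t₀ = 0) (hz : z t₀ = π / 2) :
    ∀ t : ℝ, x (t + 4 * t₀) = x t + 2 * π ∧ y (t + 4 * t₀) = y t ∧
      z (t + 4 * t₀) = z t :=
  stmt17_general x y z h hx0 hy0 t₀ hx hz
end
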